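/- arXiv:2303.09122 — 6 statements merged into one kernel-verified Lean document; each statement's English description precedes it below -/
import Mathlib

section
/- Let γ ⊆ ℝ^d be an axis-aligned box and let B ⊆ ℝ^d be an axis-aligned box (or orthant) that intersects the interior of γ but is not completely contained in γ's complement and does not contain γ. If no (d−2)-dimensional face of B intersects the interior of γ (B is 'long'), then B ∩ γ is a box whose boundary within the interior of γ consists only of pieces of (d−1)-faces of B, each of which crosses γ completely in d−1 of the axis directions. -/
/-- Let `γ = ∏ [c_i, e_i]` be a box cell and `B = ∏ [a_i, b_i]` a box that
intersects the interior of `γ`.  If no `(d−2)`-face of `B` (determined by two distinct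
axes `k ≠ l` and extreme values `v ∈ {a k, b k}`, `w ∈ {a l, b l}`) intersects the
interior of `γ` ("B is long"), then every `(d−1)`-face of `B` (axis `k`, value
`v ∈ {a k, b k}`) that intersects the interior of `γ` crosses `γ` completely in every
other axis direction: for all `i ≠ k`, the projection `(c i, e i)` of `γ`'s interior is
contained in `[a i, b i]`. -/
theorem stmt5 (d : ℕ) (a b c e : Fin d → ℝ)
    (hmeet : ∃ x : Fin d → ℝ, (∀ i, x i ∈ Set.Icc (a i) (b i)) ∧
      ∀ i, x i ∈ Set.Ioo (c i) (e i))
    (hlong : ∀ k l : Fin d, k ≠ l → ∀ v ∈ ({a k, b k} : Set ℝ), ∀ w ∈ ({a l, b l} : Set ℝ),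
      ¬ ∃ x : Fin d → ℝ, (∀ i, x i ∈ Set.Icc (a i) (b i)) ∧ x k = v ∧ x l = w ∧
        ∀ i, x i ∈ Set.Ioo (c i) (e i)) :
    ∀ k : Fin d, ∀ v ∈ ({a k, b k} : Set ℝ),
      (∃ x : Fin d → ℝ, (∀ i, x i ∈ Set.Icc (a i) (b i)) ∧ x k = v ∧
        ∀ i, x i ∈ Set.Ioo (c i) (e i)) →
      ∀ i : Fin d, i ≠ k → Set.Ioo (c i) (e i) ⊆ Set.Icc (a i) (b i) := by
  rintro k v hv ⟨x, hxbox, hxk, hxint⟩ i hik t ht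
  by_contra hcon
  rw [Set.mem_Icc, not_and_or, not_le, not_le] at hcon
  rcases hcon with h | h
  · -- t < a i, so a i ∈ Ioo (c i) (e i)
    refine hlong k i hik.symm v hv (a i) (Or.inl rfl)
      ⟨Function.update x i (a i), ?_, ?_, ?_, ?_⟩
    · intro j
      rcases eq_or_ne j i with rfl | hj
      · simp [Function.update_self, (hxbox j).1.trans (hxbox j).2, le_refl]
      · simpa [Function.update_of_ne hj] using hxbox j
    · rw [Function.update_of_ne hik.symm]; exact hxk
    · simp
    · intro j
      rcases eq_or_ne j i with rfl | hj
      · simp only [Function.update_self]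
        exact ⟨ht.1.trans h, lt_of_le_of_lt (hxbox j).1 (hxint j).2⟩
      · simpa [Function.update_of_ne hj] using hxint j
  · -- b i < t, so b i ∈ Ioo (c i) (e i)
    refine hlong k i hik.symm v hv (b i) (Or.inr rfl)
      ⟨Function.update x i (b i), ?_, ?_, ?_, ?_⟩
    · intro j
      rcases eq_or_ne j i with rfl | hj
      · simp [Function.update_self, (hxbox j).1.trans (hxbox j).2, le_refl]
      · simpa [Function.update_of_ne hj] using hxbox j
    · rw [Function.update_of_ne hik.symm]; exact hxk
    · simp
    · intro j
      rcases eq_or_ne j i with rfl | hj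
      · simp only [Function.update_self]
        exact ⟨lt_of_lt_of_le (hxint j).1 (hxbox j).2, h.trans ht.2⟩
      · simpa [Function.update_of_ne hj] using hxint j
end

section
/- Let c > 0 be a constant and d ≥ 4. Suppose T: ℕ → ℝ≥0 satisfies T(N) ≤ 2·T(⌈((1 + 2c/t)/2^{2/d})·N⌉) + C·t·N for all N > N_0, with T(N) ≤ C·t^{d/2} for N ≤ N_0, where t = t(N) is fixed at t = log N (for the top-level N). Then T(N) = O(t^{d/2} · N^{1/log_2(2^{2/d}/(1+2c/t))}) = O(N^{d/2} (log N)^{d/2}). -/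
set_option maxHeartbeats 2000000 in
/-- master-theorem analysis of the recurrence: for constants `c, C > 0` and
`d ≥ 4` there are constants `C', K` (depending only on `c, d, C`) such that for every
parameter `t ≥ max(1, 4cd)` and every monotone `T : ℝ → ℝ` satisfying
`T(N) ≤ 2 T(αN) + C t N` for `N > 1`, where `α = (1 + 2c/t)/2^{2/d}`, and
`T(N) ≤ C t^{d/2}` for `N ≤ 1`, we have `T(N) ≤ C' t^{d/2} N^{d/2 + K/t}` for all
`N ≥ 1`. -/
theorem stmt7 (c C : ℝ) (hc : 0 < c) (hC : 0 < C) (d : ℕ) (hd : 4 ≤ d) :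
    ∃ C' K : ℝ, 0 < C' ∧ 0 < K ∧
      ∀ t : ℝ, 1 ≤ t → 4 * c * d ≤ t →
        ∀ T : ℝ → ℝ, Monotone T →
          (∀ N : ℝ, 1 < N → T N ≤ 2 * T ((1 + 2 * c / t) / 2 ^ ((2 : ℝ) / d) * N) + C * t * N) →
          (∀ N : ℝ, N ≤ 1 → T N ≤ C * t ^ ((d : ℝ) / 2)) →
          ∀ N : ℝ, 1 ≤ N → T N ≤ C' * t ^ ((d : ℝ) / 2) * N ^ ((d : ℝ) / 2 + K / t) := by
  classical
  have hd0 : (0:ℝ) < d := by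
    have : (4:ℝ) ≤ d := by exact_mod_cast hd
    linarith
  have hd4 : (4:ℝ) ≤ d := by exact_mod_cast hd
  refine ⟨8 * C, 2 * c * (d:ℝ) ^ 2, by positivity, by positivity, ?_⟩
  intro t ht1 htcd T hmono hrec hbase N hN
  have ht0 : 0 < t := lt_of_lt_of_le one_pos ht1
  have hN0 : 0 < N := lt_of_lt_of_le one_pos hN
  set α := (1 + 2 * c / t) / 2 ^ ((2 : ℝ) / d) with hαdef
  set β := (d:ℝ) / 2 + 2 * c * (d:ℝ) ^ 2 / t with hβdef
  have hpow2 : (0:ℝ) < (2:ℝ) ^ ((2:ℝ)/d) := Real.rpow_pos_of_pos (by norm_num) _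
  have hα0 : 0 < α := by rw [hαdef]; positivity
  -- 2^(2/d) ≤ 3/2
  have hpow2le : (2:ℝ) ^ ((2:ℝ)/d) ≤ 3/2 := by
    have h12 : (2:ℝ)/d ≤ 1/2 := by
      rw [div_le_div_iff₀ hd0 (by norm_num : (0:ℝ) < 2)]; linarith
    have h1 : (2:ℝ) ^ ((2:ℝ)/d) ≤ (2:ℝ) ^ ((1:ℝ)/2) :=
      Real.rpow_le_rpow_of_exponent_le (by norm_num) h12
    have h2 : (2:ℝ) ^ ((1:ℝ)/2) ≤ 3/2 := by
      rw [show ((1:ℝ)/2) = (2:ℝ)⁻¹ by norm_num, Real.rpow_inv_le_iff_of_pos (by norm_num)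
        (by norm_num) (by norm_num)]
      norm_num
    linarith
  have hα23 : 2/3 ≤ α := by
    rw [hαdef, le_div_iff₀ hpow2]
    nlinarith [div_pos (by linarith : (0:ℝ) < 2*c) ht0]
  -- log facts
  have hct0 : (0:ℝ) < 1 + 2*c/t := by positivity
  have hlogα : Real.log α = Real.log (1 + 2*c/t) - (2/(d:ℝ)) * Real.log 2 := by
    rw [hαdef, Real.log_div (ne_of_gt hct0) (ne_of_gt hpow2), Real.log_rpow (by norm_num)]
  have hlog1p : Real.log (1 + 2*c/t) ≤ 2*c/t := by
    have := Real.log_le_sub_one_of_pos hct0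
    linarith
  have hctle : 2*c/t ≤ 1/(2*(d:ℝ)) := by
    rw [div_le_div_iff₀ ht0 (by positivity)]
    nlinarith
  have hL0 : 0 < 2 * Real.log 2 / (d:ℝ) - 2*c/t := by
    have h1 : 1/(2*(d:ℝ)) < 2 * Real.log 2 / (d:ℝ) := by
      rw [div_lt_div_iff₀ (by positivity) hd0]
      nlinarith [Real.log_two_gt_d9]
    linarith
  have hL : 2 * Real.log 2 / (d:ℝ) - 2*c/t ≤ -Real.log α := by
    have heq : 2 * Real.log 2 / (d:ℝ) = (2/(d:ℝ)) * Real.log 2 := by ring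
    rw [hlogα]; linarith [hlog1p, heq ▸ (le_refl (2 * Real.log 2 / (d:ℝ)))]
  have hα1 : α < 1 := by
    have hlogneg : Real.log α < 0 := by linarith
    exact (Real.log_neg_iff hα0).mp hlogneg
  have hβ0 : 0 ≤ β := by rw [hβdef]; positivity
  -- key exponent inequality
  have hkey : Real.log 2 ≤ β * (2 * Real.log 2 / (d:ℝ) - 2*c/t) := by
    have hexp : β * (2 * Real.log 2 / (d:ℝ) - 2*c/t)
        = Real.log 2 + (c*(d:ℝ)/t) * (4*Real.log 2 - 1 - 4*c*(d:ℝ)/t) := by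
      rw [hβdef]; field_simp; ring
    have h4 : 4*c*(d:ℝ)/t ≤ 1 := by rw [div_le_one ht0]; linarith
    have hcd : 0 < c*(d:ℝ)/t := by positivity
    rw [hexp]
    nlinarith [Real.log_two_gt_d9]
  have htd0 : 0 < t ^ ((d:ℝ)/2) := Real.rpow_pos_of_pos ht0 _
  have htd : t ≤ t ^ ((d:ℝ)/2) := by
    calc t = t ^ (1:ℝ) := (Real.rpow_one t).symm
    _ ≤ t ^ ((d:ℝ)/2) := Real.rpow_le_rpow_of_exponent_le ht1 (by linarith)
  -- main induction
  have Q : ∀ k : ℕ, ∀ M : ℝ, 0 ≤ M → α ^ k * M ≤ 1 →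
      T M ≤ 2 ^ k * (C * t ^ ((d:ℝ)/2)) + 3 * C * t * M * ((2*α) ^ k - 1) := by
    intro k
    induction k with
    | zero =>
      intro M hM0 hM1
      simp only [pow_zero, one_mul, sub_self, mul_zero, add_zero] at hM1 ⊢
      exact hbase M hM1
    | succ k ih =>
      intro M hM0 hM1
      by_cases hM : M ≤ 1
      · have hb := hbase M hM
        have h2k : (1:ℝ) ≤ 2 ^ (k+1) := by
          calc (1:ℝ) = 1 ^ (k+1) := (one_pow _).symm
          _ ≤ 2 ^ (k+1) := pow_le_pow_left₀ (by norm_num) (by norm_num) _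
        have h2a : (1:ℝ) ≤ (2*α) ^ (k+1) := by
          calc (1:ℝ) = 1 ^ (k+1) := (one_pow _).symm
          _ ≤ (2*α) ^ (k+1) := pow_le_pow_left₀ (by norm_num) (by linarith) _
        have hh1 : (0:ℝ) ≤ 3 * C * t * M * ((2*α) ^ (k+1) - 1) :=
          mul_nonneg (by positivity) (by linarith)
        have hh2 : (0:ℝ) ≤ ((2:ℝ) ^ (k+1) - 1) * (C * t ^ ((d:ℝ)/2)) :=
          mul_nonneg (by linarith) (by positivity)
        linarith
      · have hM1' : 1 < M := lt_of_not_ge hM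
        have hrecN := hrec M hM1'
        have hαk : α ^ k * (α * M) ≤ 1 := by
          have e : α ^ k * (α * M) = α ^ (k+1) * M := by ring
          rw [e]; exact hM1
        have hQ := ih (α * M) (by positivity) hαk
        have hP1 : (1:ℝ) ≤ (2*α) ^ k := by
          calc (1:ℝ) = 1 ^ k := (one_pow _).symm
          _ ≤ (2*α) ^ k := pow_le_pow_left₀ (by norm_num) (by linarith) _
        have hCtM : 0 < C * t * M := by positivity
        simp only [pow_succ]
        nlinarith [mul_nonneg hCtM.le (by linarith : (0:ℝ) ≤ 6*α - 4),
          mul_nonneg (mul_nonneg hCtM.le (by linarith : (0:ℝ) ≤ 6*α - 4))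
            (by linarith : (0:ℝ) ≤ (2*α)^k - 1)]
  -- N^β ≥ 1
  have hNβ1 : 1 ≤ N ^ β := by
    have := Real.rpow_le_rpow_of_exponent_le hN hβ0
    rwa [Real.rpow_zero] at this
  have hex : ∃ k : ℕ, α ^ k * N ≤ 1 := by
    obtain ⟨k, hk⟩ := exists_pow_lt_of_lt_one (show (0:ℝ) < 1/N by positivity) hα1
    exact ⟨k, (le_div_iff₀ hN0).mp hk.le⟩
  have hkspec := Nat.find_spec hex
  rcases hq : Nat.find hex with _ | j
  · rw [hq] at hkspec
    simp only [pow_zero, one_mul] at hkspec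
    have hb := hbase N hkspec
    have : C * t ^ ((d:ℝ)/2) ≤ 8 * C * t ^ ((d:ℝ)/2) * N ^ β := by
      have h8 : (0:ℝ) ≤ C * t ^ ((d:ℝ)/2) * (8 * N ^ β - 1) :=
        mul_nonneg (by positivity) (by linarith)
      nlinarith [h8]
    linarith
  · rw [hq] at hkspec
    have hmin : 1 < α ^ j * N := by
      have := Nat.find_min hex (by rw [hq]; exact Nat.lt_succ_self j)
      exact lt_of_not_ge this
    have hQ := Q (j+1) N hN0.le hkspec
    -- bound the sum term
    have hsum : 3 * C * t * N * ((2*α) ^ (j+1) - 1) ≤ 3 * C * t * 2 ^ (j+1) := by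
      have e1 : N * (2*α) ^ (j+1) = 2 ^ (j+1) * (α ^ (j+1) * N) := by
        rw [mul_pow]; ring
      have h1 : N * ((2*α) ^ (j+1) - 1) ≤ 2 ^ (j+1) := by
        have h2 : N * (2*α) ^ (j+1) ≤ 2 ^ (j+1) := by
          rw [e1]
          nlinarith [pow_pos (show (0:ℝ) < 2 by norm_num) (j+1)]
        nlinarith
      have h3 : (0:ℝ) ≤ 3 * C * t := by positivity
      calc 3 * C * t * N * ((2*α) ^ (j+1) - 1) = 3 * C * t * (N * ((2*α) ^ (j+1) - 1)) := by ring
      _ ≤ 3 * C * t * 2 ^ (j+1) := mul_le_mul_of_nonneg_left h1 h3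
    -- 2^j ≤ N^β
    have h2j : (2:ℝ) ^ j ≤ N ^ β := by
      have hlogN : 0 < (j:ℝ) * Real.log α + Real.log N := by
        have hl := Real.log_pos hmin
        rwa [Real.log_mul (by positivity) (ne_of_gt hN0), Real.log_pow] at hl
      have hβL : Real.log 2 ≤ β * (-Real.log α) :=
        le_trans hkey (mul_le_mul_of_nonneg_left hL hβ0)
      have hj0 : (0:ℝ) ≤ (j:ℝ) := Nat.cast_nonneg j
      have hmain : (j:ℝ) * Real.log 2 ≤ β * Real.log N := by
        calc (j:ℝ) * Real.log 2 ≤ (j:ℝ) * (β * (-Real.log α)) :=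
          mul_le_mul_of_nonneg_left hβL hj0
        _ = β * ((j:ℝ) * (-Real.log α)) := by ring
        _ ≤ β * Real.log N := mul_le_mul_of_nonneg_left (by linarith) hβ0
      have e2 : (2:ℝ) ^ j = Real.exp ((j:ℝ) * Real.log 2) := by
        rw [← Real.log_pow, Real.exp_log (by positivity)]
      rw [e2, Real.rpow_def_of_pos hN0]
      exact Real.exp_le_exp.mpr (by linarith [hmain, mul_comm (Real.log N) β])
    -- finish
    have h2s : (2:ℝ) ^ (j+1) = 2 * 2 ^ j := by rw [pow_succ]; ring
    have hCt : C * t ≤ C * t ^ ((d:ℝ)/2) := mul_le_mul_of_nonneg_left htd hC.le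
    have h2jpos : (0:ℝ) < 2 ^ j := pow_pos (by norm_num) j
    have hfin : T N ≤ 8 * C * t ^ ((d:ℝ)/2) * 2 ^ j := by
      rw [h2s] at hQ hsum
      nlinarith [mul_le_mul_of_nonneg_left hCt (by positivity : (0:ℝ) ≤ 3 * (2 * 2 ^ j)),
        mul_le_mul_of_nonneg_left hCt (by positivity : (0:ℝ) ≤ 2 * 2 ^ j)]
    calc T N ≤ 8 * C * t ^ ((d:ℝ)/2) * 2 ^ j := hfin
    _ ≤ 8 * C * t ^ ((d:ℝ)/2) * N ^ β := by
      exact mul_le_mul_of_nonneg_left h2j (by positivity)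
end

section
/- Let I_1, …, I_k be intervals on the real axis and consider the map that, for each i from 1 to d in turn, collapses a finite union of disjoint open slabs {x : x_i ∈ U_i} (U_i ⊆ ℝ open, a finite union of intervals) to measure zero by the monotone map φ_i(s) = s − λ(U_i ∩ (−∞, s]). Then for any measurable set A ⊆ ℝ^d disjoint from all the slabs ⋃_i {x : x_i ∈ U_i}, the image of A under (φ_1, …, φ_d) applied coordinatewise has the same Lebesgue measure as A. -/
open MeasureTheory

open Set

namespace Stmt9Aux

noncomputable def phi (U : Set ℝ) (s : ℝ) : ℝ := s - (volume (U ∩ Set.Iic s)).toReal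

variable {U : Set ℝ}

lemma vol_ne_top (hfin : volume U ≠ ⊤) (s : Set ℝ) : volume (U ∩ s) ≠ ⊤ :=
  fun h => hfin (top_le_iff.1 (h ▸ measure_mono inter_subset_left))

lemma phi_diff (hm : MeasurableSet U) (hfin : volume U ≠ ⊤) {s t : ℝ} (hst : s ≤ t) :
    phi U t - phi U s = (t - s) - (volume (U ∩ Set.Ioc s t)).toReal := by
  have h1 : U ∩ Set.Iic t = (U ∩ Set.Iic s) ∪ (U ∩ Set.Ioc s t) := by
    rw [← inter_union_distrib_left, Set.Iic_union_Ioc_eq_Iic hst]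
  have hd : Disjoint (U ∩ Set.Iic s) (U ∩ Set.Ioc s t) :=
    Disjoint.mono inter_subset_right inter_subset_right
      (by simpa using Set.Iic_disjoint_Ioc (le_refl s))
  have h2 : volume (U ∩ Set.Iic t) = volume (U ∩ Set.Iic s) + volume (U ∩ Set.Ioc s t) := by
    rw [h1, measure_union hd (hm.inter measurableSet_Ioc)]
  have h3 : (volume (U ∩ Set.Iic t)).toReal
      = (volume (U ∩ Set.Iic s)).toReal + (volume (U ∩ Set.Ioc s t)).toReal := by
    rw [h2, ENNReal.toReal_add (vol_ne_top hfin _) (vol_ne_top hfin _)]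
  simp only [phi]
  linarith

lemma vol_Ioc_le (hfin : volume U ≠ ⊤) {s t : ℝ} (hst : s ≤ t) :
    (volume (U ∩ Set.Ioc s t)).toReal ≤ t - s := by
  have h : volume (U ∩ Set.Ioc s t) ≤ ENNReal.ofReal (t - s) := by
    rw [← Real.volume_Ioc]; exact measure_mono inter_subset_right
  calc (volume (U ∩ Set.Ioc s t)).toReal
      ≤ (ENNReal.ofReal (t - s)).toReal := ENNReal.toReal_mono ENNReal.ofReal_ne_top h
    _ = t - s := ENNReal.toReal_ofReal (by linarith)

lemma phi_mono (hm : MeasurableSet U) (hfin : volume U ≠ ⊤) : Monotone (phi U) := by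
  intro s t hst
  have := phi_diff hm hfin hst
  have h0 : (0:ℝ) ≤ (volume (U ∩ Set.Ioc s t)).toReal := ENNReal.toReal_nonneg
  have := vol_Ioc_le hfin hst
  linarith

lemma phi_lip (hm : MeasurableSet U) (hfin : volume U ≠ ⊤) {s t : ℝ} (hst : s ≤ t) :
    phi U t - phi U s ≤ t - s := by
  have := phi_diff hm hfin hst
  have h0 : (0:ℝ) ≤ (volume (U ∩ Set.Ioc s t)).toReal := ENNReal.toReal_nonneg
  linarith

lemma phi_abs (hm : MeasurableSet U) (hfin : volume U ≠ ⊤) (s t : ℝ) :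
    |phi U t - phi U s| ≤ |t - s| := by
  rcases le_total s t with h | h
  · rw [abs_of_nonneg (sub_nonneg.2 (phi_mono hm hfin h)), abs_of_nonneg (sub_nonneg.2 h)]
    exact phi_lip hm hfin h
  · rw [abs_sub_comm, abs_sub_comm t s, abs_of_nonneg (sub_nonneg.2 (phi_mono hm hfin h)),
      abs_of_nonneg (sub_nonneg.2 h)]
    exact phi_lip hm hfin h

lemma phi_cont (hm : MeasurableSet U) (hfin : volume U ≠ ⊤) : Continuous (phi U) := by
  rw [Metric.continuous_iff]
  intro s ε hε
  exact ⟨ε, hε, fun t ht => lt_of_le_of_lt (by simpa [Real.dist_eq] using phi_abs hm hfin s t) ht⟩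

lemma phi_le_self (s : ℝ) : phi U s ≤ s := by
  simp [phi, ENNReal.toReal_nonneg]

lemma self_sub_le_phi (hfin : volume U ≠ ⊤) (s : ℝ) : s - (volume U).toReal ≤ phi U s := by
  have : (volume (U ∩ Set.Iic s)).toReal ≤ (volume U).toReal :=
    ENNReal.toReal_mono hfin (measure_mono inter_subset_left)
  simp only [phi]; linarith


lemma map_phi_Ioo (hm : MeasurableSet U) (hfin : volume U ≠ ⊤) {a b : ℝ} (hab : a < b) :
    volume.restrict Uᶜ (phi U ⁻¹' Set.Ioo a b) = ENNReal.ofReal (b - a) := by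
  set T := (volume U).toReal with hT
  set sA := {s | phi U s ≤ a} with hsA
  have hAne : sA.Nonempty := ⟨a, phi_le_self a⟩
  have hAbdd : BddAbove sA := ⟨a + T, fun s hs => by
    have h1 := self_sub_le_phi hfin s
    have h2 : phi U s ≤ a := hs
    linarith⟩
  have hAcl : IsClosed sA := isClosed_le (phi_cont hm hfin) continuous_const
  set u := sSup sA with hu
  have huA : phi U u ≤ a := hAcl.csSup_mem hAne hAbdd
  have hu2 : ∀ s, u < s → a < phi U s := fun s hs =>
    lt_of_not_ge fun h => absurd (le_csSup hAbdd h) (not_le.2 hs)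
  have hu3 : phi U u = a := by
    refine le_antisymm huA (le_of_forall_pos_lt_add fun ε hε => ?_)
    have h1 := hu2 (u + ε/2) (by linarith)
    have h2 := phi_lip hm hfin (le_add_of_nonneg_right (by linarith : (0:ℝ) ≤ ε/2) : u ≤ u + ε/2)
    linarith
  set sB := {s | b ≤ phi U s} with hsB
  have hBne : sB.Nonempty := ⟨b + T, by
    have := self_sub_le_phi hfin (b + T); simp only [hsB, mem_setOf_eq]; linarith⟩
  have hBbdd : BddBelow sB := ⟨b, fun s hs => by
    have h1 := phi_le_self (U := U) s
    have h2 : b ≤ phi U s := hs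
    linarith⟩
  have hBcl : IsClosed sB := isClosed_le continuous_const (phi_cont hm hfin)
  set v := sInf sB with hv
  have hvB : b ≤ phi U v := hBcl.csInf_mem hBne hBbdd
  have hv2 : ∀ s, s < v → phi U s < b := fun s hs =>
    lt_of_not_ge fun h => absurd (csInf_le hBbdd h) (not_le.2 hs)
  have hv3 : phi U v = b := by
    refine le_antisymm ?_ hvB
    refine le_of_forall_pos_lt_add fun ε hε => ?_
    have h1 := hv2 (v - ε/2) (by linarith)
    have h2 := phi_lip hm hfin (by linarith : v - ε/2 ≤ v)
    linarith
  have huv : u ≤ v := by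
    by_contra h
    have := phi_mono hm hfin (le_of_not_ge h)
    rw [hu3, hv3] at this
    linarith
  have hpre : phi U ⁻¹' Set.Ioo a b = Set.Ioo u v := by
    ext s
    simp only [mem_preimage, mem_Ioo]
    constructor
    · rintro ⟨h1, h2⟩
      refine ⟨lt_of_not_ge fun h => ?_, lt_of_not_ge fun h => ?_⟩
      · have := (phi_mono hm hfin h).trans huA; linarith
      · have := hvB.trans (phi_mono hm hfin h); linarith
    · rintro ⟨h1, h2⟩; exact ⟨hu2 s h1, hv2 s h2⟩
  have hd := phi_diff hm hfin huv
  rw [hu3, hv3] at hd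
  have hnn : (0:ℝ) ≤ (v - u) - (b - a) := by
    have : (0:ℝ) ≤ (volume (U ∩ Set.Ioc u v)).toReal := ENNReal.toReal_nonneg
    linarith
  have h1 : volume (U ∩ Set.Ioc u v) = ENNReal.ofReal ((v - u) - (b - a)) := by
    have heq : (volume (U ∩ Set.Ioc u v)).toReal = (v - u) - (b - a) := by linarith
    rw [← heq, ENNReal.ofReal_toReal (vol_ne_top hfin _)]
  have h2 : volume (Set.Ioo u v ∩ U) = volume (U ∩ Set.Ioc u v) := by
    apply le_antisymm
    · exact measure_mono fun x hx => ⟨hx.2, hx.1.1, hx.1.2.le⟩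
    · calc volume (U ∩ Set.Ioc u v) ≤ volume ((Set.Ioo u v ∩ U) ∪ {v}) := by
            refine measure_mono fun x hx => ?_
            rcases eq_or_lt_of_le hx.2.2 with h | h
            · exact Or.inr h
            · exact Or.inl ⟨⟨hx.2.1, h⟩, hx.1⟩
        _ ≤ volume (Set.Ioo u v ∩ U) + volume {v} := measure_union_le _ _
        _ = volume (Set.Ioo u v ∩ U) := by simp
  have hsub : volume (Set.Ioo u v ∩ Uᶜ) = volume (Set.Ioo u v) - volume (Set.Ioo u v ∩ U) := by
    rw [← Set.diff_eq, ← Set.diff_self_inter]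
    refine measure_diff inter_subset_left (measurableSet_Ioo.inter hm).nullMeasurableSet ?_
    refine ne_top_of_le_ne_top ?_ (measure_mono inter_subset_left)
    rw [Real.volume_Ioo]; exact ENNReal.ofReal_ne_top
  rw [Measure.restrict_apply (measurableSet_Ioo.preimage (phi_cont hm hfin).measurable), hpre,
    hsub, h2, h1, Real.volume_Ioo, ← ENNReal.ofReal_sub _ hnn]
  congr 1
  ring


lemma map_phi_Ioo' (hm : MeasurableSet U) (hfin : volume U ≠ ⊤) (a b : ℝ) :
    Measure.map (phi U) (volume.restrict Uᶜ) (Set.Ioo a b) = volume (Set.Ioo a b) := by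
  rw [Measure.map_apply (phi_cont hm hfin).measurable measurableSet_Ioo, Real.volume_Ioo]
  rcases lt_or_ge a b with h | h
  · exact map_phi_Ioo hm hfin h
  · rw [Set.Ioo_eq_empty (not_lt.2 h), ENNReal.ofReal_eq_zero.2 (by linarith : b - a ≤ 0)]
    simp

lemma map_phi (hm : MeasurableSet U) (hfin : volume U ≠ ⊤) :
    Measure.map (phi U) (volume.restrict Uᶜ) = volume := by
  have : IsLocallyFiniteMeasure (Measure.map (phi U) (volume.restrict Uᶜ)) := by
    constructor
    intro x
    refine ⟨Set.Ioo (x - 1) (x + 1), Ioo_mem_nhds (by linarith) (by linarith), ?_⟩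
    rw [map_phi_Ioo' hm hfin, Real.volume_Ioo]
    exact ENNReal.ofReal_lt_top
  exact Real.measure_ext_Ioo_rat fun p q => map_phi_Ioo' hm hfin p q


lemma vol_eq_of_phi_eq (hm : MeasurableSet U) (hfin : volume U ≠ ⊤) {s t : ℝ} (hst : s ≤ t)
    (he : phi U s = phi U t) : (volume (U ∩ Set.Ioc s t)).toReal = t - s := by
  have := phi_diff hm hfin hst; linarith

lemma mem_closure_of_phi_eq (hm : MeasurableSet U) (hfin : volume U ≠ ⊤) {s t : ℝ}
    (hne : s ≠ t) (he : phi U s = phi U t) : s ∈ closure U := by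
  by_contra hc
  rw [Metric.mem_closure_iff] at hc
  push_neg at hc
  obtain ⟨ε, hε, hsep⟩ := hc
  rcases lt_or_gt_of_ne hne with h | h
  · have hv := vol_eq_of_phi_eq hm hfin h.le he
    have hsub : U ∩ Set.Ioc s t ⊆ Set.Icc (s + ε) t := fun x hx => by
      have hd := hsep x hx.1
      rw [Real.dist_eq, abs_of_nonpos (by linarith [hx.2.1] : s - x ≤ 0)] at hd
      exact ⟨by linarith, hx.2.2⟩
    have hb : (volume (U ∩ Set.Ioc s t)).toReal ≤ (ENNReal.ofReal (t - (s + ε))).toReal :=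
      ENNReal.toReal_mono ENNReal.ofReal_ne_top
        (by rw [← Real.volume_Icc]; exact measure_mono hsub)
    have hmax : (ENNReal.ofReal (t - (s + ε))).toReal < t - s := by
      rcases le_or_gt (t - (s + ε)) 0 with h0 | h0
      · rw [ENNReal.ofReal_eq_zero.2 h0]; simpa using h
      · rw [ENNReal.toReal_ofReal h0.le]; linarith
    linarith
  · have hv := vol_eq_of_phi_eq hm hfin h.le he.symm
    have hsub : U ∩ Set.Ioc t s ⊆ Set.Icc t (s - ε) := fun x hx => by
      have hd := hsep x hx.1
      rw [Real.dist_eq, abs_of_nonneg (by linarith [hx.2.2] : 0 ≤ s - x)] at hd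
      exact ⟨hx.2.1.le, by linarith⟩
    have hb : (volume (U ∩ Set.Ioc t s)).toReal ≤ (ENNReal.ofReal ((s - ε) - t)).toReal :=
      ENNReal.toReal_mono ENNReal.ofReal_ne_top
        (by rw [← Real.volume_Icc]; exact measure_mono hsub)
    have hmax : (ENNReal.ofReal ((s - ε) - t)).toReal < s - t := by
      rcases le_or_gt ((s - ε) - t) 0 with h0 | h0
      · rw [ENNReal.ofReal_eq_zero.2 h0]; simpa using h
      · rw [ENNReal.toReal_ofReal h0.le]; linarith
    linarith


lemma volume_finite {n : ℕ} (f g : Fin n → ℝ) :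
    volume (⋃ j, Set.Ioo (f j) (g j)) ≠ ⊤ := by
  refine ne_top_of_le_ne_top ?_ (measure_iUnion_le _)
  rw [tsum_fintype]
  refine (ENNReal.sum_lt_top.2 fun j _ => ?_).ne
  rw [Real.volume_Ioo]
  exact ENNReal.ofReal_lt_top

lemma boundary_countable {n : ℕ} (f g : Fin n → ℝ) :
    (closure (⋃ j, Set.Ioo (f j) (g j)) \ ⋃ j, Set.Ioo (f j) (g j)).Countable := by
  have hsub : closure (⋃ j, Set.Ioo (f j) (g j)) ⊆ ⋃ j, Set.Icc (f j) (g j) :=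
    closure_minimal (Set.iUnion_mono fun j => Set.Ioo_subset_Icc_self)
      (isClosed_iUnion_of_finite fun j => isClosed_Icc)
  refine Set.Countable.mono (fun x hx => ?_)
    (Set.countable_iUnion fun j : Fin n =>
      (Set.countable_singleton (f j)).union (Set.countable_singleton (g j)))
  obtain ⟨j, hj⟩ := Set.mem_iUnion.1 (hsub hx.1)
  have hnot : x ∉ Set.Ioo (f j) (g j) := fun h => hx.2 (Set.mem_iUnion.2 ⟨j, h⟩)
  refine Set.mem_iUnion.2 ⟨j, ?_⟩
  rcases eq_or_lt_of_le hj.1 with h1 | h1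
  · exact Or.inl h1.symm
  · rcases eq_or_lt_of_le hj.2 with h2 | h2
    · exact Or.inr h2
    · exact absurd ⟨h1, h2⟩ hnot

end Stmt9Aux

/-- slab shrinking preserves measure: for each axis `i` let `U i ⊆ ℝ` be a
finite union of bounded open intervals, and let `φ_i(s) = s − λ(U i ∩ (−∞, s])`.  Then
for any measurable `A ⊆ ℝ^d` disjoint from all the slabs `{x : x_i ∈ U i}`, the image of
`A` under the coordinatewise map `(φ_1, …, φ_d)` has the same Lebesgue measure as `A`. -/
theorem stmt9 (d : ℕ) (U : Fin d → Set ℝ)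
    (hU : ∀ i, ∃ (n : ℕ) (f g : Fin n → ℝ), U i = ⋃ j, Set.Ioo (f j) (g j))
    (A : Set (Fin d → ℝ)) (hA : MeasurableSet A)
    (hdisj : ∀ x ∈ A, ∀ i, x i ∉ U i) :
    volume ((fun x : Fin d → ℝ =>
        fun i => x i - (volume (U i ∩ Set.Iic (x i))).toReal) '' A) = volume A := by
  classical
  have hmU : ∀ i, MeasurableSet (U i) := fun i => by
    obtain ⟨n, f, g, h⟩ := hU i
    rw [h]; exact MeasurableSet.iUnion fun j => measurableSet_Ioo
  have hfin : ∀ i, volume (U i) ≠ ⊤ := fun i => by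
    obtain ⟨n, f, g, h⟩ := hU i
    rw [h]; exact Stmt9Aux.volume_finite f g
  have hcnt : ∀ i, (closure (U i) \ U i).Countable := fun i => by
    obtain ⟨n, f, g, h⟩ := hU i
    rw [h]; exact Stmt9Aux.boundary_countable f g
  set Φ : (Fin d → ℝ) → (Fin d → ℝ) := fun x i => Stmt9Aux.phi (U i) (x i) with hΦ
  show volume (Φ '' A) = volume A
  have hcont : Continuous Φ :=
    continuous_pi fun i => (Stmt9Aux.phi_cont (hmU i) (hfin i)).comp (continuous_apply i)
  have hmeas : Measurable Φ := hcont.measurable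
  set S : Set (Fin d → ℝ) := Set.pi Set.univ (fun i => (U i)ᶜ) with hS
  have hSm : MeasurableSet S := MeasurableSet.univ_pi fun i => (hmU i).compl
  set ν : Measure (Fin d → ℝ) := Measure.pi (fun i => volume.restrict (U i)ᶜ) with hν
  have hAS : A ⊆ S := fun x hx i _ => hdisj x hx i
  have hνS : ν = volume.restrict S := by
    refine Measure.pi_eq fun s hs => ?_
    rw [Measure.restrict_apply (MeasurableSet.univ_pi hs)]
    have hi : Set.pi Set.univ s ∩ S = Set.pi Set.univ (fun i => s i ∩ (U i)ᶜ) :=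
      (Set.pi_inter_distrib).symm
    rw [hi, volume_pi, Measure.pi_pi]
    exact Finset.prod_congr rfl fun i _ => (Measure.restrict_apply (hs i)).symm
  have hmap : Measure.map Φ ν = volume := by
    rw [volume_pi]
    refine (Measure.pi_eq fun s hs => ?_).symm
    rw [Measure.map_apply hmeas (MeasurableSet.univ_pi hs)]
    have hpre : Φ ⁻¹' Set.pi Set.univ s
        = Set.pi Set.univ (fun i => Stmt9Aux.phi (U i) ⁻¹' (s i)) := by
      ext x; simp [Set.mem_pi, hΦ]
    rw [hpre, hν, Measure.pi_pi]
    refine Finset.prod_congr rfl fun i _ => ?_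
    rw [← Measure.map_apply (Stmt9Aux.phi_cont (hmU i) (hfin i)).measurable (hs i),
      Stmt9Aux.map_phi (hmU i) (hfin i)]
  have hlow : volume A ≤ volume (Φ '' A) := by
    have h1 : ν A = volume A := by
      rw [hνS, Measure.restrict_apply hA, Set.inter_eq_left.2 hAS]
    calc volume A = ν A := h1.symm
      _ ≤ ν (Φ ⁻¹' (Φ '' A)) := measure_mono (Set.subset_preimage_image _ _)
      _ ≤ Measure.map Φ ν (Φ '' A) := Measure.le_map_apply hmeas.aemeasurable _
      _ = volume (Φ '' A) := by rw [hmap]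
  set Bd : Set (Fin d → ℝ) := ⋃ i, Function.eval i ⁻¹' (closure (U i) \ U i) with hBd
  have hBdm : MeasurableSet Bd := MeasurableSet.iUnion fun i =>
    (isClosed_closure.measurableSet.diff (hmU i)).preimage (measurable_pi_apply i)
  have hBdnull : volume Bd = 0 := by
    refine measure_iUnion_null fun i => ?_
    rw [volume_pi]
    exact Measure.pi_eval_preimage_null _ ((hcnt i).measure_zero _)
  set A' := A \ Bd with hA'
  have hA'm : MeasurableSet A' := hA.diff hBdm
  have hInj : Set.InjOn Φ A' := by
    intro x hx y hy hxy
    funext i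
    by_contra hne
    have h1 : Stmt9Aux.phi (U i) (x i) = Stmt9Aux.phi (U i) (y i) := congrFun hxy i
    have h2 : x i ∈ closure (U i) :=
      Stmt9Aux.mem_closure_of_phi_eq (hmU i) (hfin i) hne h1
    exact hx.2 (Set.mem_iUnion.2 ⟨i, h2, hdisj x hx.1 i⟩)
  have hImMeas : MeasurableSet (Φ '' A') :=
    hA'm.image_of_continuousOn_injOn hcont.continuousOn hInj
  have hup : volume (Φ '' A) ≤ volume A := by
    have himg : Φ '' A ⊆ Φ '' A' ∪ Φ '' (A ∩ Bd) := by
      rw [← Set.image_union]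
      refine Set.image_mono fun x hx => ?_
      by_cases h : x ∈ Bd
      · exact Or.inr ⟨hx, h⟩
      · exact Or.inl ⟨hx, h⟩
    have hpart2 : volume (Φ '' (A ∩ Bd)) = 0 := by
      have hnull : volume (⋃ i, Function.eval i ⁻¹'
          (Stmt9Aux.phi (U i) '' (closure (U i) \ U i))) = 0 := by
        refine measure_iUnion_null fun i => ?_
        rw [volume_pi]
        exact Measure.pi_eval_preimage_null _
          (((hcnt i).image (Stmt9Aux.phi (U i))).measure_zero _)
      refine measure_mono_null (fun y hy => ?_) hnull
      · obtain ⟨x, ⟨hxA, hxB⟩, rfl⟩ := hy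
        obtain ⟨i, hi⟩ := Set.mem_iUnion.1 hxB
        exact Set.mem_iUnion.2 ⟨i, ⟨x i, hi, rfl⟩⟩
    have hpart1 : volume (Φ '' A') ≤ volume A := by
      have him : volume (Φ '' A') = volume (Φ ⁻¹' (Φ '' A') ∩ S) := by
        conv_lhs => rw [← hmap]
        rw [Measure.map_apply hmeas hImMeas, hνS, Measure.restrict_apply (hmeas hImMeas)]
      rw [him]
      have hsub : Φ ⁻¹' (Φ '' A') ∩ S ⊆ A' ∪ Bd := by
        rintro x ⟨hxp, hxS⟩
        obtain ⟨y, hyA', hyx⟩ := hxp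
        rcases eq_or_ne y x with rfl | hne
        · exact Or.inl hyA'
        · obtain ⟨i, hnei⟩ := Function.ne_iff.1 hne
          have h1 : Stmt9Aux.phi (U i) (x i) = Stmt9Aux.phi (U i) (y i) :=
            (congrFun hyx i).symm
          have h2 : x i ∈ closure (U i) :=
            Stmt9Aux.mem_closure_of_phi_eq (hmU i) (hfin i) (Ne.symm hnei) h1
          exact Or.inr (Set.mem_iUnion.2 ⟨i, h2, hxS i (Set.mem_univ i)⟩)
      calc volume (Φ ⁻¹' (Φ '' A') ∩ S) ≤ volume (A' ∪ Bd) := measure_mono hsub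
        _ ≤ volume A' + volume Bd := measure_union_le _ _
        _ = volume A' := by rw [hBdnull, add_zero]
        _ ≤ volume A := measure_mono Set.diff_subset
    calc volume (Φ '' A) ≤ volume (Φ '' A' ∪ Φ '' (A ∩ Bd)) := measure_mono himg
      _ ≤ volume (Φ '' A') + volume (Φ '' (A ∩ Bd)) := measure_union_le _ _
      _ = volume (Φ '' A') := by rw [hpart2, add_zero]
      _ ≤ volume A := hpart1
  exact le_antisymm hup hlow
end

section
/- Let Z_1,…,Z_ℓ be shapes in ℝ^d, each a finite union of orthants with all defining coordinates in [0,1/2], and let S be a finite family of translates Z_{i(S)} + t_S with t_S ∈ [0,1/2]^d. Set u_i := (4i, 0, …, 0). Replace each orthant O of Z_i by the unit hypercube B_O with B_O ∩ [0,1]^d = O ∩ [0,1]^d, let Q := {B_O + u_i : O an orthant of Z_i, 1 ≤ i ≤ ℓ} ∪ {[0,1]^d, u_{ℓ+1} + [0,1]^d}, S* := ⋃_{B∈Q} B, and P := {u_{i(S)} − t_S : S ∈ S} ∪ {u_0, u_{ℓ+1}}. Then ⋂_{p∈P}(S* − p) ∩ [0,1]^d = ⋂_{S∈S} S ∩ [0,1]^d;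 consequently ⋂_{S∈S} S ∩ [0,1]^d ≠ ∅ iff ⋂_{p∈P}(S* − p) ≠ ∅. -/
/-- The orthant `{x | x_j ≥ a_j (if ε j) , x_j ≤ a_j (otherwise)}`. -/
def orthSet (d : ℕ) (a : Fin d → ℝ) (ε : Fin d → Bool) : Set (Fin d → ℝ) :=
  {x | ∀ j, if ε j then a j ≤ x j else x j ≤ a j}

/-- The unit hypercube replacing the orthant `orthSet d a ε`, agreeing with it inside
`[0,1]^d` when all `a j ∈ [0,1/2]`. -/
def orthCube (d : ℕ) (a : Fin d → ℝ) (ε : Fin d → Bool) : Set (Fin d → ℝ) :=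
  {x | ∀ j, if ε j then x j ∈ Set.Icc (a j) (a j + 1) else x j ∈ Set.Icc (a j - 1) (a j)}

/-- `u_k = (4k, 0, …, 0)`. -/
def uvec (d k : ℕ) : Fin d → ℝ := fun j => if (j : ℕ) = 0 then 4 * k else 0

lemma cube_subset_orthSet (d : ℕ) (a : Fin d → ℝ) (ε : Fin d → Bool) :
    orthCube d a ε ⊆ orthSet d a ε := by
  intro y hy j
  have h := hy j
  by_cases hj : ε j <;> simp only [hj, if_true, if_false, Bool.false_eq_true, Set.mem_Icc] at h ⊢
  · exact h.1
  · exact h.2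

lemma mem_cube (d : ℕ) (a : Fin d → ℝ) (ε : Fin d → Bool)
    (ha : ∀ j, a j ∈ Set.Icc (0:ℝ) (1/2)) (y : Fin d → ℝ)
    (hy : y ∈ orthSet d a ε) (hb : ∀ j, -(1/2) ≤ y j ∧ y j ≤ 1) :
    y ∈ orthCube d a ε := by
  intro j
  have h := hy j
  have h2 := (ha j).1
  have h3 := (ha j).2
  obtain ⟨hb1, hb2⟩ := hb j
  by_cases hj : ε j <;> simp only [hj, if_true, if_false, Bool.false_eq_true, Set.mem_Icc] at h ⊢ <;>
    constructor <;> linarith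

lemma cube_coord_bound (d : ℕ) (a : Fin d → ℝ) (ε : Fin d → Bool)
    (ha : ∀ j, a j ∈ Set.Icc (0:ℝ) (1/2)) (y : Fin d → ℝ)
    (hy : y ∈ orthCube d a ε) (j : Fin d) : -1 ≤ y j ∧ y j ≤ 3/2 := by
  have h := hy j
  have h2 := (ha j).1
  have h3 := (ha j).2
  by_cases hj : ε j <;> simp only [hj, if_true, if_false, Bool.false_eq_true, Set.mem_Icc] at h <;>
    constructor <;> linarith

lemma uvec_zero (d : ℕ) (hd : 0 < d) (k : ℕ) : uvec d k ⟨0, hd⟩ = 4 * k := by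
  simp [uvec]

lemma uvec0 (d : ℕ) : uvec d 0 = 0 := by
  funext j; simp [uvec]

/-- reduction from intersections of translates of unions of orthants
(Problem 3) to Problem 1.  Shapes `Z i = ⋃_k orthSet (a i k) (ε i k)` (`i : Fin ℓ`) have
all defining coordinates in `[0,1/2]`; the family `S` consists of translates
`Z (idx s) + tvec s` with `tvec s ∈ [0,1/2]^d`.  With
`Q = {B_O + u_{i+1}} ∪ {[0,1]^d, u_{ℓ+1} + [0,1]^d}`, `S* = ⋃_{B∈Q} B` and
`P = {u_{idx s + 1} − tvec s} ∪ {u_0, u_{ℓ+1}}`, we have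
`⋂_{p∈P}(S* − p) ∩ [0,1]^d = ⋂_{s}(Z_{idx s} + tvec s) ∩ [0,1]^d`, and consequently
`⋂_s (Z_{idx s} + tvec s) ∩ [0,1]^d ≠ ∅ ↔ ⋂_{p∈P}(S* − p) ≠ ∅`. -/
theorem stmt10 (d ℓ : ℕ) (hd : 0 < d)
    (n : Fin ℓ → ℕ)
    (a : (i : Fin ℓ) → Fin (n i) → Fin d → ℝ)
    (ε : (i : Fin ℓ) → Fin (n i) → Fin d → Bool)
    (ha : ∀ i k j, a i k j ∈ Set.Icc (0 : ℝ) (1 / 2))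
    (ι : Type*) [Fintype ι] (idx : ι → Fin ℓ) (tvec : ι → Fin d → ℝ)
    (htvec : ∀ s j, tvec s j ∈ Set.Icc (0 : ℝ) (1 / 2))
    (Sstar : Set (Fin d → ℝ))
    (hSstar : Sstar =
      (⋃ i : Fin ℓ, ⋃ k : Fin (n i),
          (fun x => x + uvec d ((i : ℕ) + 1)) '' orthCube d (a i k) (ε i k)) ∪
        {x | ∀ j, x j ∈ Set.Icc (0 : ℝ) 1} ∪
        (fun x => x + uvec d (ℓ + 1)) '' {x | ∀ j, x j ∈ Set.Icc (0 : ℝ) 1})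
    (P : Set (Fin d → ℝ))
    (hP : P = {uvec d 0, uvec d (ℓ + 1)} ∪
      Set.range (fun s : ι => uvec d ((idx s : ℕ) + 1) - tvec s)) :
    ((⋂ p ∈ P, {x | x + p ∈ Sstar}) ∩ {x | ∀ j, x j ∈ Set.Icc (0 : ℝ) 1} =
      (⋂ s : ι, (fun z => z + tvec s) '' (⋃ k, orthSet d (a (idx s) k) (ε (idx s) k))) ∩
        {x | ∀ j, x j ∈ Set.Icc (0 : ℝ) 1}) ∧
    (((⋂ s : ι, (fun z => z + tvec s) '' (⋃ k, orthSet d (a (idx s) k) (ε (idx s) k))) ∩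
        {x | ∀ j, x j ∈ Set.Icc (0 : ℝ) 1}).Nonempty ↔
      (⋂ p ∈ P, {x | x + p ∈ Sstar}).Nonempty) := by
  set j0 : Fin d := ⟨0, hd⟩ with hj0
  -- disjunctive description of membership in Sstar
  have hSmem : ∀ z, z ∈ Sstar ↔
      (∃ i : Fin ℓ, ∃ k : Fin (n i), ∃ y ∈ orthCube d (a i k) (ε i k),
          y + uvec d ((i : ℕ) + 1) = z) ∨
      (∀ j, z j ∈ Set.Icc (0 : ℝ) 1) ∨
      (∃ y, (∀ j, y j ∈ Set.Icc (0 : ℝ) 1) ∧ y + uvec d (ℓ + 1) = z) := by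
    intro z
    rw [hSstar]
    simp only [Set.mem_union, Set.mem_iUnion, Set.mem_image, Set.mem_setOf_eq, or_assoc]
  -- the two universal bounds from membership in Sstar
  have hstar : ∀ z ∈ Sstar, 0 ≤ z j0 ∧ (z j0 ≤ 1 → ∀ j, z j ∈ Set.Icc (0 : ℝ) 1) := by
    intro z hz
    rcases (hSmem z).1 hz with ⟨i, k, y, hy, rfl⟩ | hz' | ⟨y, hy, rfl⟩
    · have hb := cube_coord_bound d _ _ (ha i k) y hy j0
      have hi : (0:ℝ) ≤ (i : ℕ) := Nat.cast_nonneg _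
      have he : (y + uvec d ((i : ℕ) + 1)) j0 = y j0 + 4 * (((i : ℕ) : ℝ) + 1) := by
        rw [Pi.add_apply, uvec_zero d hd]; push_cast; ring
      rw [he]
      constructor
      · linarith [hb.1]
      · intro h; exfalso; linarith [hb.1]
    · exact ⟨(hz' j0).1, fun _ => hz'⟩
    · have hy0 := hy j0
      have he : (y + uvec d (ℓ + 1)) j0 = y j0 + 4 * ((ℓ : ℝ) + 1) := by
        rw [Pi.add_apply, uvec_zero d hd]; push_cast; ring
      rw [he]
      have hl : (0:ℝ) ≤ (ℓ : ℕ) := Nat.cast_nonneg _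
      constructor
      · linarith [hy0.1]
      · intro h; exfalso; linarith [hy0.1]
  -- two free membership facts
  have hmem0 : ∀ x : Fin d → ℝ, (∀ j, x j ∈ Set.Icc (0 : ℝ) 1) → x + uvec d 0 ∈ Sstar := by
    intro x hx
    rw [uvec0, add_zero]
    exact (hSmem x).2 (Or.inr (Or.inl hx))
  have hmeml : ∀ x : Fin d → ℝ, (∀ j, x j ∈ Set.Icc (0 : ℝ) 1) →
      x + uvec d (ℓ + 1) ∈ Sstar := by
    intro x hx
    exact (hSmem _).2 (Or.inr (Or.inr ⟨x, hx, rfl⟩))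
  -- the key per-s equivalence
  have hkey : ∀ x : Fin d → ℝ, (∀ j, x j ∈ Set.Icc (0 : ℝ) 1) → ∀ s : ι,
      (x + (uvec d ((idx s : ℕ) + 1) - tvec s) ∈ Sstar ↔
        x ∈ (fun z => z + tvec s) '' (⋃ k, orthSet d (a (idx s) k) (ε (idx s) k))) := by
    intro x hx s
    have hx0 := hx j0
    have ht0 := htvec s j0
    have hup : (x + (uvec d ((idx s : ℕ) + 1) - tvec s)) j0
        = x j0 + 4 * (((idx s : ℕ) : ℝ) + 1) - tvec s j0 := by
      rw [Pi.add_apply, Pi.sub_apply, uvec_zero d hd]; push_cast; ring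
    constructor
    · intro h
      rcases (hSmem _).1 h with ⟨i, k, y, hy, hyz⟩ | h' | ⟨y, hy, hyz⟩
      · -- first coordinate forces i = idx s
        have e0 := congrFun hyz j0
        have he : (y + uvec d ((i : ℕ) + 1)) j0 = y j0 + 4 * (((i : ℕ) : ℝ) + 1) := by
          rw [Pi.add_apply, uvec_zero d hd]; push_cast; ring
        rw [he, hup] at e0
        have hb := cube_coord_bound d _ _ (ha i k) y hy j0
        have hii : i = idx s := by
          have h1 : ((i : ℕ) : ℝ) < ((idx s : ℕ) : ℝ) + 1 := by
            linarith [hb.1, hb.2, hx0.1, hx0.2, ht0.1, ht0.2]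
          have h2 : ((idx s : ℕ) : ℝ) < ((i : ℕ) : ℝ) + 1 := by
            linarith [hb.1, hb.2, hx0.1, hx0.2, ht0.1, ht0.2]
          have h1' : (i : ℕ) < (idx s : ℕ) + 1 := by exact_mod_cast h1
          have h2' : (idx s : ℕ) < (i : ℕ) + 1 := by exact_mod_cast h2
          exact Fin.ext (by omega)
        subst hii
        have hyeq : ∀ j, y j = x j - tvec s j := by
          intro j
          have := congrFun hyz j
          simp only [Pi.add_apply, Pi.sub_apply] at this
          linarith
        refine ⟨y, Set.mem_iUnion.2 ⟨k, cube_subset_orthSet d _ _ hy⟩, ?_⟩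
        funext j
        simp only [Pi.add_apply]
        rw [hyeq j]; ring
      · exfalso
        have := (h' j0).2
        rw [hup] at this
        have : x j0 + 4 * (((idx s : ℕ) : ℝ) + 1) - tvec s j0 ≤ 1 := this
        have hi : (0:ℝ) ≤ ((idx s : ℕ) : ℝ) := Nat.cast_nonneg _
        linarith [hx0.1, ht0.2]
      · exfalso
        have e0 := congrFun hyz j0
        have he : (y + uvec d (ℓ + 1)) j0 = y j0 + 4 * ((ℓ : ℝ) + 1) := by
          rw [Pi.add_apply, uvec_zero d hd]; push_cast; ring
        rw [he, hup] at e0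
        have hy0 := hy j0
        have hil : ((idx s : ℕ) : ℝ) + 1 ≤ ℓ := by
          have := (idx s).isLt
          exact_mod_cast Nat.succ_le_of_lt this
        linarith [hy0.1, hx0.2, ht0.1]
    · rintro ⟨y, hy, hyx⟩
      rcases Set.mem_iUnion.1 hy with ⟨k, hk⟩
      have hyeq : ∀ j, y j = x j - tvec s j := by
        intro j
        have := congrFun hyx j
        simp only [Pi.add_apply] at this
        linarith
      have hycube : y ∈ orthCube d (a (idx s) k) (ε (idx s) k) := by
        refine mem_cube d _ _ (ha (idx s) k) y hk (fun j => ?_)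
        have h1 := (hx j).1
        have h2 := (hx j).2
        have h3 := (htvec s j).1
        have h4 := (htvec s j).2
        rw [hyeq j]
        constructor <;> linarith
      refine (hSmem _).2 (Or.inl ⟨idx s, k, y, hycube, ?_⟩)
      funext j
      simp only [Pi.add_apply, Pi.sub_apply]
      rw [hyeq j]; ring
  -- membership in the P-intersection
  have hPmem : ∀ x : Fin d → ℝ, (∀ p ∈ P, x + p ∈ Sstar) ↔
      (x + uvec d 0 ∈ Sstar ∧ x + uvec d (ℓ + 1) ∈ Sstar ∧
        ∀ s : ι, x + (uvec d ((idx s : ℕ) + 1) - tvec s) ∈ Sstar) := by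
    intro x
    simp only [hP, Set.mem_union, Set.mem_insert_iff, Set.mem_singleton_iff, Set.mem_range]
    constructor
    · intro h
      exact ⟨h _ (Or.inl (Or.inl rfl)), h _ (Or.inl (Or.inr rfl)),
        fun s => h _ (Or.inr ⟨s, rfl⟩)⟩
    · rintro ⟨h1, h2, h3⟩ p ((rfl | rfl) | ⟨s, rfl⟩)
      · exact h1
      · exact h2
      · exact h3 s
  -- the set equality
  have heq : ((⋂ p ∈ P, {x | x + p ∈ Sstar}) ∩ {x | ∀ j, x j ∈ Set.Icc (0 : ℝ) 1} =
      (⋂ s : ι, (fun z => z + tvec s) '' (⋃ k, orthSet d (a (idx s) k) (ε (idx s) k))) ∩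
        {x | ∀ j, x j ∈ Set.Icc (0 : ℝ) 1}) := by
    ext x
    simp only [Set.mem_inter_iff, Set.mem_setOf_eq, Set.mem_iInter]
    constructor
    · rintro ⟨h1, hx⟩
      exact ⟨fun s => (hkey x hx s).1 (((hPmem x).1 h1).2.2 s), hx⟩
    · rintro ⟨h1, hx⟩
      refine ⟨(hPmem x).2 ⟨hmem0 x hx, hmeml x hx, fun s => (hkey x hx s).2 ?_⟩, hx⟩
      exact h1 s
  refine ⟨heq, ?_⟩
  constructor
  · rintro ⟨x, hx⟩
    rw [← heq] at hx
    exact ⟨x, hx.1⟩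
  · rintro ⟨x, hx⟩
    have hx' : ∀ p ∈ P, x + p ∈ Sstar := Set.mem_iInter₂.1 hx
    obtain ⟨h0, h1, -⟩ := (hPmem x).1 hx'
    rw [uvec0, add_zero] at h0
    have hx0 : 0 ≤ x j0 := (hstar x h0).1
    have hxle : x j0 ≤ 1 := by
      rcases (hSmem _).1 h1 with ⟨i, k, y, hy, hyz⟩ | h' | ⟨y, hy, hyz⟩
      · exfalso
        have e0 := congrFun hyz j0
        have he : (y + uvec d ((i : ℕ) + 1)) j0 = y j0 + 4 * (((i : ℕ) : ℝ) + 1) := by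
          rw [Pi.add_apply, uvec_zero d hd]; push_cast; ring
        have he2 : (x + uvec d (ℓ + 1)) j0 = x j0 + 4 * ((ℓ : ℝ) + 1) := by
          rw [Pi.add_apply, uvec_zero d hd]; push_cast; ring
        rw [he, he2] at e0
        have hb := cube_coord_bound d _ _ (ha i k) y hy j0
        have hil : ((i : ℕ) : ℝ) + 1 ≤ ℓ := by
          exact_mod_cast Nat.succ_le_of_lt i.isLt
        linarith [hb.2]
      · exfalso
        have := (h' j0).2
        have he2 : (x + uvec d (ℓ + 1)) j0 = x j0 + 4 * ((ℓ : ℝ) + 1) := by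
          rw [Pi.add_apply, uvec_zero d hd]; push_cast; ring
        rw [he2] at this
        have hl : (0:ℝ) ≤ (ℓ : ℕ) := Nat.cast_nonneg _
        linarith
      · have e0 := congrFun hyz j0
        have he : (y + uvec d (ℓ + 1)) j0 = y j0 + 4 * ((ℓ : ℝ) + 1) := by
          rw [Pi.add_apply, uvec_zero d hd]; push_cast; ring
        have he2 : (x + uvec d (ℓ + 1)) j0 = x j0 + 4 * ((ℓ : ℝ) + 1) := by
          rw [Pi.add_apply, uvec_zero d hd]; push_cast; ring
        rw [he, he2] at e0
        linarith [(hy j0).2]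
    have hxbox : ∀ j, x j ∈ Set.Icc (0 : ℝ) 1 := (hstar x h0).2 hxle
    have hmemL : x ∈ (⋂ p ∈ P, {x | x + p ∈ Sstar}) ∩ {x | ∀ j, x j ∈ Set.Icc (0 : ℝ) 1} :=
      ⟨hx, hxbox⟩
    rw [heq] at hmemL
    exact ⟨x, hmemL⟩
end

section
/- Fix integers n₀ ≥ 1, g ≥ 1, d ≥ 1. For x ∈ [0, n₀^g) and a ∈ {0,…,g−1}, let φ_a(x) denote the (a+1)-th least significant base-n₀ digit of ⌊x⌋. Let G = (V,E) with V = {0,…,n₀−1}, and for each (α,a) ≠ (β,b) with α,β ∈ {1,…,d}, a,b ∈ {0,…,g−1}, and each non-edge pair u,v (including u = v), define Y_{α,β,a,b,u,v} := {x ∈ [0,n₀^g)^d : φ_a(x_α) = u, φ_b(x_β) = v}. Then [0,n₀^g)^d \ ⋃ Y_{α,β,a,b,u,v} equals {x ∈ [0,n₀^g)^d : the dg values φ_a(x_α) (α ∈ {1,…,d}, a ∈ {0,…,g−1}) form a (dg)-clique of G}. In particular, this set is nonempty iff G contains a clique of size dg. -/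
/-- The `(a+1)`-th least significant base-`n₀` digit of `⌊x⌋`. -/
noncomputable def digitOf (n₀ : ℕ) (x : ℝ) (a : ℕ) : ℤ := ⌊x⌋ / (n₀ : ℤ) ^ a % (n₀ : ℤ)

lemma sum_digits_bounds {n : ℤ} (hn : 0 < n) (c : ℕ → ℤ)
    (hc : ∀ i, 0 ≤ c i ∧ c i < n) (a : ℕ) :
    0 ≤ ∑ i ∈ Finset.range a, c i * n ^ i ∧ ∑ i ∈ Finset.range a, c i * n ^ i < n ^ a := by
  induction a with
  | zero => simp
  | succ a ih =>
    obtain ⟨h0, h1⟩ := ih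
    rw [Finset.sum_range_succ]
    have hp : (0:ℤ) ≤ n ^ a := pow_nonneg hn.le a
    have h2 : c a * n ^ a ≤ (n - 1) * n ^ a :=
      mul_le_mul_of_nonneg_right (by linarith [(hc a).2]) hp
    constructor
    · have := mul_nonneg (hc a).1 hp; linarith
    · have := pow_succ n a; nlinarith

lemma digit_extract {n : ℤ} (hn : 0 < n) (g : ℕ) (c : ℕ → ℤ)
    (hc : ∀ i, 0 ≤ c i ∧ c i < n) {a : ℕ} (ha : a < g) :
    (∑ i ∈ Finset.range g, c i * n ^ i) / n ^ a % n = c a := by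
  have hsplit : ∑ i ∈ Finset.range g, c i * n ^ i
      = (∑ i ∈ Finset.range a, c i * n ^ i)
        + n ^ a * ∑ i ∈ Finset.range (g - a), c (a + i) * n ^ i := by
    obtain ⟨k, rfl⟩ : ∃ k, g = a + k := ⟨g - a, by omega⟩
    rw [Finset.mul_sum, Finset.sum_range_add]
    simp only [Nat.add_sub_cancel_left, Nat.add_sub_cancel]
    refine congrArg₂ (· + ·) rfl (Finset.sum_congr rfl fun i _ => ?_)
    rw [pow_add]; ring
  have hL := sum_digits_bounds hn c hc a
  have hne : (n:ℤ) ^ a ≠ 0 := (pow_pos hn a).ne'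
  rw [hsplit, Int.add_mul_ediv_left _ _ hne, Int.ediv_eq_zero_of_lt hL.1 hL.2, zero_add]
  have hT : ∑ i ∈ Finset.range (g - a), c (a + i) * n ^ i
      = c a + n * ∑ i ∈ Finset.range (g - a - 1), c (a + (i + 1)) * n ^ i := by
    rw [show g - a = (g - a - 1) + 1 by omega, Finset.sum_range_succ']
    rw [Finset.mul_sum]
    simp only [pow_succ, pow_zero, mul_one, add_zero]
    rw [add_comm]
    congr 1
    refine Finset.sum_congr rfl fun i _ => ?_
    ring
  rw [hT, Int.add_mul_emod_self_left, Int.emod_eq_of_lt (hc a).1 (hc a).2]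

lemma digit_bounds {n₀ : ℕ} (hn : 1 ≤ n₀) (x : ℝ) (a : ℕ) :
    0 ≤ digitOf n₀ x a ∧ digitOf n₀ x a < (n₀ : ℤ) := by
  have hpos : (0:ℤ) < n₀ := by exact_mod_cast hn
  exact ⟨Int.emod_nonneg _ hpos.ne', Int.emod_lt_of_pos _ hpos⟩

/-- For a graph `G` on `{0,…,n₀−1} ⊆ ℤ`, with
`Y_{α,β,a,b,u,v} = {x ∈ [0,n₀^g)^d : φ_a(x_α) = u, φ_b(x_β) = v}` over
`(α,a) ≠ (β,b)` and non-adjacent pairs `u, v` (including `u = v`), the complement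
`[0,n₀^g)^d \ ⋃ Y` equals the set of `x` whose `dg` digits `φ_a(x_α)` are pairwise
adjacent in `G` (a `(dg)`-clique); in particular it is nonempty iff `G` has a clique of
size `d·g` with vertices in `[0,n₀)`. -/
theorem stmt13 (d g n₀ : ℕ) (hd : 1 ≤ d) (hg : 1 ≤ g) (hn : 1 ≤ n₀) (G : SimpleGraph ℤ) :
    ({x : Fin d → ℝ | ∀ α, x α ∈ Set.Ico (0 : ℝ) ((n₀ : ℝ) ^ g)} \
        ⋃ (α : Fin d) (β : Fin d) (a : Fin g) (b : Fin g) (_ : (α, a) ≠ (β, b))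
          (u : ℤ) (v : ℤ)
          (_ : 0 ≤ u ∧ u < (n₀ : ℤ) ∧ 0 ≤ v ∧ v < (n₀ : ℤ) ∧ ¬ G.Adj u v),
          {x : Fin d → ℝ | (∀ α', x α' ∈ Set.Ico (0 : ℝ) ((n₀ : ℝ) ^ g)) ∧
            digitOf n₀ (x α) a = u ∧ digitOf n₀ (x β) b = v} =
      {x : Fin d → ℝ | (∀ α, x α ∈ Set.Ico (0 : ℝ) ((n₀ : ℝ) ^ g)) ∧
        ∀ α β : Fin d, ∀ a b : Fin g, (α, a) ≠ (β, b) →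
          G.Adj (digitOf n₀ (x α) a) (digitOf n₀ (x β) b)}) ∧
    ({x : Fin d → ℝ | (∀ α, x α ∈ Set.Ico (0 : ℝ) ((n₀ : ℝ) ^ g)) ∧
        ∀ α β : Fin d, ∀ a b : Fin g, (α, a) ≠ (β, b) →
          G.Adj (digitOf n₀ (x α) a) (digitOf n₀ (x β) b)}.Nonempty ↔
      ∃ s : Finset ℤ, G.IsNClique (d * g) s ∧ ∀ w ∈ s, 0 ≤ w ∧ w < (n₀ : ℤ)) := by
  have hn0 : (0:ℤ) < (n₀:ℤ) := by exact_mod_cast hn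
  constructor
  · ext x
    simp only [Set.mem_diff, Set.mem_setOf_eq, Set.mem_iUnion, not_exists]
    constructor
    · rintro ⟨hbox, hnot⟩
      refine ⟨hbox, fun α β a b hne => ?_⟩
      by_contra hadj
      exact hnot α β a b hne (digitOf n₀ (x α) a) (digitOf n₀ (x β) b)
        ⟨(digit_bounds hn _ _).1, (digit_bounds hn _ _).2, (digit_bounds hn _ _).1,
         (digit_bounds hn _ _).2, hadj⟩ ⟨hbox, rfl, rfl⟩
    · rintro ⟨hbox, hadj⟩
      refine ⟨hbox, ?_⟩
      rintro α β a b hne u v ⟨_, _, _, _, hnadj⟩ ⟨_, hu, hv⟩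
      exact hnadj (hu ▸ hv ▸ hadj α β a b hne)
  · constructor
    · rintro ⟨x, hbox, hadj⟩
      set f : Fin d × Fin g → ℤ := fun p => digitOf n₀ (x p.1) p.2 with hf
      have hadj' : ∀ p q : Fin d × Fin g, p ≠ q → G.Adj (f p) (f q) := by
        intro p q hpq
        exact hadj p.1 q.1 p.2 q.2 (by simpa [Prod.ext_iff] using hpq)
      have hinj : Function.Injective f := by
        intro p q h
        by_contra hpq
        exact G.irrefl (h ▸ hadj' p q hpq)
      refine ⟨Finset.image f Finset.univ, ⟨?_, ?_⟩, ?_⟩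
      · intro u hu v hv huv
        simp only [Finset.coe_image, Set.mem_image] at hu hv
        obtain ⟨p, _, rfl⟩ := hu
        obtain ⟨q, _, rfl⟩ := hv
        exact hadj' p q (fun h => huv (by rw [h]))
      · rw [Finset.card_image_of_injective _ hinj, Finset.card_univ,
          Fintype.card_prod, Fintype.card_fin, Fintype.card_fin]
      · intro w hw
        simp only [Finset.mem_image] at hw
        obtain ⟨p, _, rfl⟩ := hw
        exact digit_bounds hn _ _
    · rintro ⟨s, ⟨hclique, hcard⟩, hbdd⟩
      have e : Fin d × Fin g ≃ s :=
        finProdFinEquiv.trans ((finCongr hcard.symm).trans s.equivFin.symm)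
      set c : Fin d → ℕ → ℤ := fun α i =>
        if h : i < g then ((e (α, ⟨i, h⟩)) : ℤ) else 0 with hc
      have hcb : ∀ α i, 0 ≤ c α i ∧ c α i < (n₀:ℤ) := by
        intro α i
        by_cases h : i < g
        · simp only [hc, dif_pos h]
          exact hbdd _ (e (α, ⟨i, h⟩)).2
        · simp only [hc, dif_neg h]
          exact ⟨le_refl 0, hn0⟩
      set x : Fin d → ℝ := fun α =>
        ((∑ i ∈ Finset.range g, c α i * (n₀:ℤ) ^ i : ℤ) : ℝ) with hx
      have hfloor : ∀ α, ⌊x α⌋ = ∑ i ∈ Finset.range g, c α i * (n₀:ℤ) ^ i := by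
        intro α; exact Int.floor_intCast _
      have hdig : ∀ (α : Fin d) (a : Fin g),
          digitOf n₀ (x α) a = ((e (α, a)) : ℤ) := by
        intro α a
        rw [digitOf, hfloor, digit_extract hn0 g (c α) (hcb α) a.isLt]
        simp [hc, a.isLt]
      have hboxZ : ∀ α, 0 ≤ ∑ i ∈ Finset.range g, c α i * (n₀:ℤ) ^ i ∧
          ∑ i ∈ Finset.range g, c α i * (n₀:ℤ) ^ i < (n₀:ℤ) ^ g :=
        fun α => sum_digits_bounds hn0 (c α) (hcb α) g
      refine ⟨x, fun α => ⟨?_, ?_⟩, fun α β a b hne => ?_⟩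
      · show (0:ℝ) ≤ ((∑ i ∈ Finset.range g, c α i * (n₀:ℤ) ^ i : ℤ) : ℝ)
        exact_mod_cast (hboxZ α).1
      · show ((∑ i ∈ Finset.range g, c α i * (n₀:ℤ) ^ i : ℤ) : ℝ) < (n₀:ℝ) ^ g
        exact_mod_cast (hboxZ α).2
      · rw [hdig, hdig]
        have hne' : e (α, a) ≠ e (β, b) := fun h => hne (e.injective h)
        have hne'' : ((e (α, a)) : ℤ) ≠ ((e (β, b)) : ℤ) :=
          fun h => hne' (Subtype.ext h)
        exact hclique (e (α, a)).2 (e (β, b)).2 hne''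
end

section
/- The complement in ℝ² of the 'staircase diagonal' D := ⋃_{i+j=m, 0≤i,j} [i·s, i·s + w) × [j·s', j·s' + w') (with 0 < w ≤ s, 0 < w' ≤ s') can be expressed as a union of at most O(m) axis-aligned quadrants (2-dimensional orthants). -/
/-- A 2D axis-aligned quadrant: a product `I ×ˢ J` where each factor is an open or closed
ray or all of `ℝ`. -/
def IsQuadrant (Q : Set (ℝ × ℝ)) : Prop :=
  ∃ I J : Set ℝ,
    ((∃ a, I = Set.Iio a) ∨ (∃ a, I = Set.Iic a) ∨ (∃ a, I = Set.Ioi a) ∨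
      (∃ a, I = Set.Ici a) ∨ I = Set.univ) ∧
    ((∃ b, J = Set.Iio b) ∨ (∃ b, J = Set.Iic b) ∨ (∃ b, J = Set.Ioi b) ∨
      (∃ b, J = Set.Ici b) ∨ J = Set.univ) ∧
    Q = I ×ˢ J

/-- The complement in `ℝ²` of the staircase diagonal
`D = ⋃_{i+j=m} [i·s, i·s+w) × [j·s', j·s'+w')` (with `0 < w ≤ s`, `0 < w' ≤ s'`,
`m ≥ 1`) is a union of at most `C·m` axis-aligned quadrants, `C` an absolute constant. -/
theorem stmt15 :
    ∃ C : ℕ, 0 < C ∧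
      ∀ (m : ℕ), 1 ≤ m → ∀ (s s' w w' : ℝ), 0 < w → w ≤ s → 0 < w' → w' ≤ s' →
        ∃ (k : ℕ) (Q : Fin k → Set (ℝ × ℝ)), k ≤ C * m ∧
          (∀ n, IsQuadrant (Q n)) ∧
          (⋃ i ∈ Finset.range (m + 1),
              Set.Ico ((i : ℝ) * s) ((i : ℝ) * s + w) ×ˢ
                Set.Ico (((m - i : ℕ) : ℝ) * s') (((m - i : ℕ) : ℝ) * s' + w'))ᶜ =
            ⋃ n, Q n := by
  refine ⟨8, by norm_num, ?_⟩
  intro m hm s s' w w' hw hws hw' hws'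
  have hs : 0 < s := lt_of_lt_of_le hw hws
  have hs' : 0 < s' := lt_of_lt_of_le hw' hws'
  classical
  set Cq : ℕ → Set (ℝ × ℝ) := fun i =>
    Set.Iio (((i : ℝ) + 1) * s) ×ˢ Set.Iio (((m - i : ℕ) : ℝ) * s') with hCq
  set Eq' : ℕ → Set (ℝ × ℝ) := fun i =>
    Set.Ici ((i : ℝ) * s) ×ˢ Set.Ici (((m - i : ℕ) : ℝ) * s' + w') with hEq
  set Bq : ℕ → Set (ℝ × ℝ) := fun i =>
    Set.Ici ((i : ℝ) * s + w) ×ˢ Set.Ici (((m - i : ℕ) : ℝ) * s') with hBq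
  set Lq : Set (ℝ × ℝ) := Set.Iio (0 : ℝ) ×ˢ (Set.univ : Set ℝ) with hLq
  set Rq : Set (ℝ × ℝ) := Set.Ici ((m : ℝ) * s + w) ×ˢ (Set.univ : Set ℝ) with hRq
  set f : ℕ → Set (ℝ × ℝ) := fun n =>
    if n ≤ m then Cq n
    else if n ≤ 2 * m + 1 then Eq' (n - (m + 1))
    else if n ≤ 3 * m + 2 then Bq (n - (2 * m + 2))
    else if n ≤ 3 * m + 3 then Lq else Rq with hf
  refine ⟨3 * m + 5, fun n => f n.val, by omega, ?_, ?_⟩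
  · intro n
    simp only [hf]
    split_ifs
    · exact ⟨_, _, Or.inl ⟨_, rfl⟩, Or.inl ⟨_, rfl⟩, rfl⟩
    · exact ⟨_, _, Or.inr (Or.inr (Or.inr (Or.inl ⟨_, rfl⟩))),
        Or.inr (Or.inr (Or.inr (Or.inl ⟨_, rfl⟩))), rfl⟩
    · exact ⟨_, _, Or.inr (Or.inr (Or.inr (Or.inl ⟨_, rfl⟩))),
        Or.inr (Or.inr (Or.inr (Or.inl ⟨_, rfl⟩))), rfl⟩
    · exact ⟨_, _, Or.inl ⟨_, rfl⟩, Or.inr (Or.inr (Or.inr (Or.inr rfl))), rfl⟩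
    · exact ⟨_, _, Or.inr (Or.inr (Or.inr (Or.inl ⟨_, rfl⟩))),
        Or.inr (Or.inr (Or.inr (Or.inr rfl))), rfl⟩
  · -- the set equality
    have castle : ∀ i j : ℕ, j ≤ i → ((m - i : ℕ) : ℝ) ≤ ((m - j : ℕ) : ℝ) := by
      intro i j h; exact_mod_cast Nat.cast_le.mpr (Nat.sub_le_sub_left h m)
    -- not-in-rectangle lemmas
    have hnotC : ∀ i j : ℕ, ∀ x y : ℝ, x < ((i : ℝ) + 1) * s → y < ((m - i : ℕ) : ℝ) * s' →
        ¬((j : ℝ) * s ≤ x ∧ x < (j : ℝ) * s + w ∧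
          ((m - j : ℕ) : ℝ) * s' ≤ y ∧ y < ((m - j : ℕ) : ℝ) * s' + w') := by
      intro i j x y hx hy ⟨h1, _, h3, _⟩
      rcases le_or_gt j i with hji | hji
      · have := mul_le_mul_of_nonneg_right (castle i j hji) hs'.le
        linarith
      · have hj' : ((i : ℝ) + 1) ≤ (j : ℝ) := by exact_mod_cast hji
        have := mul_le_mul_of_nonneg_right hj' hs.le
        linarith
    have hnotE : ∀ i j : ℕ, ∀ x y : ℝ, (i : ℝ) * s ≤ x → ((m - i : ℕ) : ℝ) * s' + w' ≤ y →
        ¬((j : ℝ) * s ≤ x ∧ x < (j : ℝ) * s + w ∧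
          ((m - j : ℕ) : ℝ) * s' ≤ y ∧ y < ((m - j : ℕ) : ℝ) * s' + w') := by
      intro i j x y hx hy ⟨_, h2, _, h4⟩
      rcases le_or_gt i j with hij | hij
      · have := mul_le_mul_of_nonneg_right (castle j i hij) hs'.le
        linarith
      · have hj' : ((j : ℝ) + 1) ≤ (i : ℝ) := by exact_mod_cast hij
        have := mul_le_mul_of_nonneg_right hj' hs.le
        nlinarith
    have hnotB : ∀ i j : ℕ, j ≤ m → ∀ x y : ℝ, (i : ℝ) * s + w ≤ x →
        ((m - i : ℕ) : ℝ) * s' ≤ y →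
        ¬((j : ℝ) * s ≤ x ∧ x < (j : ℝ) * s + w ∧
          ((m - j : ℕ) : ℝ) * s' ≤ y ∧ y < ((m - j : ℕ) : ℝ) * s' + w') := by
      intro i j hjm x y hx hy ⟨_, h2, _, h4⟩
      rcases le_or_gt j i with hji | hji
      · have hj' : (j : ℝ) ≤ (i : ℝ) := by exact_mod_cast hji
        have := mul_le_mul_of_nonneg_right hj' hs.le
        linarith
      · have hnat : m - j + 1 ≤ m - i := by omega
        have hj' : ((m - j : ℕ) : ℝ) + 1 ≤ ((m - i : ℕ) : ℝ) := by exact_mod_cast hnat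
        have := mul_le_mul_of_nonneg_right hj' hs'.le
        nlinarith
    ext ⟨x, y⟩
    simp only [Set.mem_compl_iff, Set.mem_iUnion, Set.mem_prod, Set.mem_Ico,
      Finset.mem_range, not_exists, Set.mem_Iio, Set.mem_Ici, Set.mem_univ, exists_prop]
    constructor
    · intro hD
      have hD' : ∀ j : ℕ, j ≤ m →
          ¬((j : ℝ) * s ≤ x ∧ x < (j : ℝ) * s + w ∧
            ((m - j : ℕ) : ℝ) * s' ≤ y ∧ y < ((m - j : ℕ) : ℝ) * s' + w') := by
        intro j hj hcon
        exact hD j ⟨by omega, ⟨hcon.1, hcon.2.1⟩, hcon.2.2.1, hcon.2.2.2⟩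
      by_cases hx0 : x < 0
      · refine ⟨⟨3 * m + 3, by omega⟩, ?_⟩
        simp only [hf]
        rw [if_neg (by omega), if_neg (by omega), if_neg (by omega), if_pos (by omega)]
        exact ⟨hx0, trivial⟩
      · push_neg at hx0
        by_cases hxR : (m : ℝ) * s + w ≤ x
        · refine ⟨⟨3 * m + 4, by omega⟩, ?_⟩
          simp only [hf]
          rw [if_neg (by omega), if_neg (by omega), if_neg (by omega), if_neg (by omega)]
          exact ⟨hxR, trivial⟩
        · push_neg at hxR
          set i : ℕ := ⌊x / s⌋₊ with hi
          have hxs : 0 ≤ x / s := div_nonneg hx0 hs.le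
          have hil : (i : ℝ) * s ≤ x := by
            have := Nat.floor_le hxs
            calc (i : ℝ) * s ≤ (x / s) * s := mul_le_mul_of_nonneg_right this hs.le
            _ = x := div_mul_cancel₀ x hs.ne'
          have hiu : x < ((i : ℝ) + 1) * s := by
            have := Nat.lt_floor_add_one (x / s)
            calc x = (x / s) * s := (div_mul_cancel₀ x hs.ne').symm
            _ < ((i : ℝ) + 1) * s := mul_lt_mul_of_pos_right (by exact_mod_cast this) hs
          have him : i ≤ m := by
            by_contra hc
            push_neg at hc
            have : ((m : ℝ) + 1) * s ≤ (i : ℝ) * s := by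
              apply mul_le_mul_of_nonneg_right _ hs.le
              exact_mod_cast hc
            linarith
          by_cases hyC : y < ((m - i : ℕ) : ℝ) * s'
          · refine ⟨⟨i, by omega⟩, ?_⟩
            simp only [hf]
            rw [if_pos him]
            exact ⟨hiu, hyC⟩
          · push_neg at hyC
            by_cases hyE : ((m - i : ℕ) : ℝ) * s' + w' ≤ y
            · refine ⟨⟨m + 1 + i, by omega⟩, ?_⟩
              simp only [hf]
              rw [if_neg (by omega), if_pos (by omega)]
              have : m + 1 + i - (m + 1) = i := by omega
              rw [this]
              exact ⟨hil, hyE⟩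
            · push_neg at hyE
              -- y in the middle band, so x must be right of rectangle i
              have hxB : (i : ℝ) * s + w ≤ x := by
                by_contra hc
                push_neg at hc
                exact hD' i him ⟨hil, hc, hyC, hyE⟩
              refine ⟨⟨2 * m + 2 + i, by omega⟩, ?_⟩
              simp only [hf]
              rw [if_neg (by omega), if_neg (by omega), if_pos (by omega)]
              have : 2 * m + 2 + i - (2 * m + 2) = i := by omega
              rw [this]
              exact ⟨hxB, hyC⟩
    · rintro ⟨n, hn⟩ j ⟨hjm, ⟨h1, h2⟩, h3, h4⟩
      have hj' : j ≤ m := by omega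
      simp only [hf] at hn
      split_ifs at hn
      · exact hnotC n.val j x y hn.1 hn.2 ⟨h1, h2, h3, h4⟩
      · exact hnotE (n.val - (m + 1)) j x y hn.1 hn.2 ⟨h1, h2, h3, h4⟩
      · exact hnotB (n.val - (2 * m + 2)) j hj' x y hn.1 hn.2 ⟨h1, h2, h3, h4⟩
      · have hx' : x < 0 := hn.1
        have : (0 : ℝ) ≤ (j : ℝ) * s := mul_nonneg (Nat.cast_nonneg j) hs.le
        linarith
      · have hj'' : (j : ℝ) ≤ (m : ℝ) := by exact_mod_cast hj'
        have hx' : (m : ℝ) * s + w ≤ x := hn.1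
        have := mul_le_mul_of_nonneg_right hj'' hs.le
        linarith
end
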